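/- arXiv:1511.00457 — 2 statements merged into one kernel-verified Lean document; each statement's English description precedes it below -/
import Mathlib

section
/- Let V ⊆ [n] and let R=(x_1,...,x_d) be an order on [n]\V. The standard matching μ_R, defined by μ_R(σ) := F(σ, x_h) when h := h_R(σ) ≠ 0 and undefined otherwise, is a well-defined partial matching on the vertices of Γ_n: when defined, σ and μ_R(σ) are adjacent in Γ_n, μ_R(μ_R(σ)) is defined and equals σ, and moreover Pr_V(σ) = Pr_V(μ_R(σ)) and h_R(σ) = h_R(μ_R(σ)). -/
/-- A full `[n]`-tuple: an ordered partition of `Fin n` into pairwise disjoint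
nonempty blocks covering everything. -/
def IsFullTuple (n : ℕ) (l : List (Finset (Fin n))) : Prop :=
  (∀ A ∈ l, A.Nonempty) ∧ l.Pairwise Disjoint ∧ l.foldr (· ∪ ·) ∅ = Finset.univ

/-- The flippable set `F(σ)`: everything, unless the last block is a singleton,
in which case that singleton is excluded. -/
def flippable (n : ℕ) (l : List (Finset (Fin n))) : Finset (Fin n) :=
  match l.getLast? with
  | some A => if A.card = 1 then Finset.univ \ A else Finset.univ
  | none => Finset.univ

/-- The flip operation `F(σ, x)`: split `x` off from its block if that block has
at least two elements; otherwise merge the singleton block `{x}` into the next block. -/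
def cflip {n : ℕ} (x : Fin n) : List (Finset (Fin n)) → List (Finset (Fin n))
  | [] => []
  | A :: rest =>
      if x ∈ A then
        if 2 ≤ A.card then {x} :: A.erase x :: rest
        else
          match rest with
          | [] => A :: rest
          | B :: rest' => insert x B :: rest'
      else A :: cflip x rest

/-- The `V`-prefix of a tuple: the maximal initial segment of blocks each
contained in `V`. -/
def prefV {n : ℕ} (V : Finset (Fin n)) (l : List (Finset (Fin n))) :
    List (Finset (Fin n)) :=
  l.takeWhile fun A => decide (A ⊆ V)

/-- Auxiliary function, operating on the reversed order `R` and the reversed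
tuple: returns the element `x_h` where `h` is the height (the first element of
`R`, read from the end, at which the tuple stops matching the suffix of
singletons `{x_{h+1}}|...|{x_d}`), or `none` if the height is `0`. -/
def heightElemRev {n : ℕ} : List (Fin n) → List (Finset (Fin n)) → Option (Fin n)
  | [], _ => none
  | x :: _, [] => some x
  | x :: xs, A :: As => if A = {x} then heightElemRev xs As else some x

/-- For an order `R = (x_1,...,x_d)` and a tuple `σ`, `heightElem R σ` is the
element `x_h` with `h = h_R(σ)` when `h_R(σ) ≠ 0`, and `none` when `h_R(σ) = 0`.
The standard matching `μ_R` sends `σ` to `F(σ, heightElem R σ)`. -/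
def heightElem {n : ℕ} (R : List (Fin n)) (l : List (Finset (Fin n))) :
    Option (Fin n) :=
  heightElemRev R.reverse l.reverse

/-!
Having height element `x = x_h` means exactly that `σ = τ|{x_{h+1}}|...|{x_d}` with `τ` not
ending in the block `{x}`. Since `R` has no repetitions, `x` lies in no block of the singleton
tail, so the flip at `x` acts on `τ` alone, and the flipped `τ` still does not end in `{x}`:
`μ_R(σ)` has the same shape and the same height. Flipping twice at `x` is the identity on any
tuple not ending in `{x}`, and a flip at `x ∉ V` changes nothing before the first block
containing `x`, which is not contained in `V`.
-/

namespace List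

variable {α : Type*} {a b : α} {l l₁ l₂ : List α}

theorem getLast?_append_ne (h₁ : l₁.getLast? ≠ some b) (h₂ : l₂.getLast? ≠ some b) :
    (l₁ ++ l₂).getLast? ≠ some b := by
  rw [getLast?_append]
  cases h : l₂.getLast? <;> simp_all

theorem getLast?_cons_ne (h : l.getLast? ≠ some b) (ha : a ≠ b) : (a :: l).getLast? ≠ some b :=
  getLast?_append_ne (l₁ := [a]) (by simpa) h

theorem getLast?_ne_of_cons (h : (a :: l).getLast? ≠ some b) : l.getLast? ≠ some b :=
  fun hl => h (by simp [getLast?_cons, hl])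

end List

namespace Finset

variable {α : Type*} {x : α} {A : Finset α}

theorem eq_singleton_of_mem_of_card_le_one (hx : x ∈ A) (hA : #A ≤ 1) : A = {x} :=
  eq_singleton_iff_unique_mem.2 ⟨hx, fun y hy => card_le_one.1 hA y hy x hx⟩

theorem two_le_card_insert [DecidableEq α] (hx : x ∉ A) (hA : A.Nonempty) :
    2 ≤ #(insert x A) := by
  rw [card_insert_of_notMem hx]
  have := hA.card_pos
  omega

end Finset

section

variable {n : ℕ} {x : Fin n}

theorem mem_flippable_iff {l : List (Finset (Fin n))} :
    x ∈ flippable n l ↔ l.getLast? ≠ some {x} := by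
  unfold flippable
  rcases l.getLast? with _ | A
  · simp
  · by_cases hA : A.card = 1
    · obtain ⟨a, rfl⟩ := Finset.card_eq_one.mp hA
      simp [eq_comm]
    · simp only [hA, if_false, Finset.mem_univ, true_iff, ne_eq, Option.some.injEq]
      rintro rfl
      simp at hA

theorem cflip_eq_self {l : List (Finset (Fin n))} (h : ∀ B ∈ l, x ∉ B) :
    cflip x l = l := by
  induction l with
  | nil => rfl
  | cons A rest ih => simp_all [cflip]

theorem cflip_append {l₁ l₂ : List (Finset (Fin n))}
    (h₁ : l₁.getLast? ≠ some {x}) (h₂ : ∀ B ∈ l₂, x ∉ B) :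
    cflip x (l₁ ++ l₂) = cflip x l₁ ++ l₂ := by
  induction l₁ with
  | nil => exact cflip_eq_self h₂
  | cons A rest ih =>
    by_cases hxA : x ∈ A
    · by_cases hA : 2 ≤ A.card
      · simp [cflip, hxA, hA]
      · cases rest with
        | nil => simp [Finset.eq_singleton_of_mem_of_card_le_one hxA (by omega)] at h₁
        | cons B rest => simp [cflip, hxA, hA]
    · simp [cflip, hxA, ih (List.getLast?_ne_of_cons h₁)]

theorem cflip_cflip {l : List (Finset (Fin n))} (hdisj : l.Pairwise Disjoint)
    (hne : ∀ A ∈ l, A.Nonempty) (hlast : l.getLast? ≠ some {x}) :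
    cflip x (cflip x l) = l := by
  induction l with
  | nil => rfl
  | cons A rest ih =>
    by_cases hxA : x ∈ A
    · by_cases hA : 2 ≤ A.card
      · simp [cflip, hxA, hA, Finset.insert_erase hxA]
      · obtain rfl := Finset.eq_singleton_of_mem_of_card_le_one hxA (by omega)
        cases rest with
        | nil => simp at hlast
        | cons B rest =>
          have hxB : x ∉ B :=
            Finset.disjoint_singleton_left.1 (List.rel_of_pairwise_cons hdisj (by simp))
          simp [cflip, Finset.two_le_card_insert hxB (hne B (by simp)), Finset.erase_insert hxB]
    · simp [cflip, hxA, ih hdisj.of_cons (fun B hB => hne B (by simp [hB]))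
        (List.getLast?_ne_of_cons hlast)]

theorem getLast?_cflip_ne {l : List (Finset (Fin n))} (hdisj : l.Pairwise Disjoint)
    (hne : ∀ A ∈ l, A.Nonempty) (hlast : l.getLast? ≠ some {x}) :
    (cflip x l).getLast? ≠ some {x} := by
  induction l with
  | nil => simp [cflip]
  | cons A rest ih =>
    have hrest := List.getLast?_ne_of_cons hlast
    by_cases hxA : x ∈ A
    · by_cases hA : 2 ≤ A.card
      · have hA' : A.erase x ≠ {x} := fun h => Finset.notMem_erase x A (by simp [h])
        simpa [cflip, hxA, hA] using List.getLast?_cons_ne hrest hA'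
      · obtain rfl := Finset.eq_singleton_of_mem_of_card_le_one hxA (by omega)
        rcases rest with _ | ⟨B, rest⟩
        · simp at hlast
        · have hxB : x ∉ B :=
            Finset.disjoint_singleton_left.1 (List.rel_of_pairwise_cons hdisj (by simp))
          have hB' : insert x B ≠ {x} := fun h => by
            simpa [h] using Finset.two_le_card_insert hxB (hne B (by simp))
          simpa [cflip] using List.getLast?_cons_ne (List.getLast?_ne_of_cons hrest) hB'
    · have hA' : A ≠ {x} := by rintro rfl; simp at hxA
      simpa [cflip, hxA] using List.getLast?_cons_ne
        (ih hdisj.of_cons (fun B hB => hne B (by simp [hB])) hrest) hA'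

theorem prefV_cflip {V : Finset (Fin n)} (hx : x ∉ V) (l : List (Finset (Fin n))) :
    prefV V (cflip x l) = prefV V l := by
  induction l with
  | nil => rfl
  | cons A rest ih =>
    by_cases hxA : x ∈ A
    · have hAV : ¬ A ⊆ V := fun h => hx (h hxA)
      have hxV : ¬ {x} ⊆ V := by simpa using hx
      by_cases hA : 2 ≤ A.card
      · simp [prefV, cflip, hxA, hA, hAV, hxV]
      · rcases rest with _ | ⟨B, rest⟩
        · simp [prefV, cflip, hxA, hA, hAV]
        · have hBV : ¬ insert x B ⊆ V := fun h => hx (h (Finset.mem_insert_self x B))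
          simp [prefV, cflip, hxA, hA, hAV, hBV]
    · by_cases hAV : A ⊆ V <;> simp_all [prefV, cflip]

theorem heightElemRev_eq_some_iff {xs : List (Fin n)} {As : List (Finset (Fin n))} :
    heightElemRev xs As = some x ↔
      ∃ p xs' As', xs = p ++ x :: xs' ∧ As = p.map (fun y => {y}) ++ As' ∧
        As'.head? ≠ some {x} := by
  constructor
  · induction xs generalizing As with
    | nil => simp [heightElemRev]
    | cons y ys ih =>
      intro h
      cases As with
      | nil =>
        obtain rfl : y = x := by simpa [heightElemRev] using h
        exact ⟨[], ys, [], rfl, rfl, by simp⟩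
      | cons B Bs =>
        by_cases hB : B = {y}
        · rw [heightElemRev, if_pos hB] at h
          obtain ⟨p, xs', As', rfl, rfl, hAs'⟩ := ih h
          exact ⟨y :: p, xs', As', rfl, by simp [hB], hAs'⟩
        · obtain rfl : y = x := by simpa [heightElemRev, hB] using h
          exact ⟨[], ys, B :: Bs, rfl, rfl, by simpa using hB⟩
  · rintro ⟨p, xs', As', rfl, rfl, hAs'⟩
    induction p with
    | nil => cases As' <;> simp_all [heightElemRev]
    | cons y p ih => simpa [heightElemRev] using ih

theorem heightElem_eq_some_iff {R : List (Fin n)} {l : List (Finset (Fin n))} :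
    heightElem R l = some x ↔
      ∃ r s front, R = r ++ x :: s ∧ l = front ++ s.map (fun y => {y}) ∧
        front.getLast? ≠ some {x} := by
  rw [heightElem, heightElemRev_eq_some_iff]
  constructor
  · rintro ⟨p, xs', As', hR, hl, hAs'⟩
    refine ⟨xs'.reverse, p.reverse, As'.reverse, ?_, ?_, by simpa using hAs'⟩
    · simpa using congrArg List.reverse hR
    · simpa using congrArg List.reverse hl
  · rintro ⟨r, s, front, rfl, rfl, hfront⟩
    exact ⟨s.reverse, r.reverse, front.reverse, by simp, by simp, by simpa using hfront⟩

end

/-- The standard matching `μ_R` associated to an order `R` on `[n] \ V` is a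
well-defined partial matching on the vertices of `Γ_n`: when `h_R(σ) ≠ 0` (i.e.
when `heightElem` returns some element `x_h`), the vertex `σ` is adjacent to
`μ_R(σ) = F(σ,x_h)` in `Γ_n`; `μ_R(μ_R(σ))` is defined, uses the same flip
element, and equals `σ`; moreover `Pr_V` and `h_R` are preserved by `μ_R`. -/
theorem standard_matching_well_defined (n : ℕ) (V : Finset (Fin n))
    (R : List (Fin n)) (hnd : R.Nodup) (hR : ∀ x : Fin n, x ∈ R ↔ x ∉ V)
    (l : List (Finset (Fin n))) (hl : IsFullTuple n l)
    (xh : Fin n) (hh : heightElem R l = some xh) :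
    xh ∈ flippable n l ∧
    heightElem R (cflip xh l) = some xh ∧
    cflip xh (cflip xh l) = l ∧
    prefV V (cflip xh l) = prefV V l := by
  obtain ⟨hne, hdisj, -⟩ := hl
  obtain ⟨r, s, front, rfl, rfl, hfront⟩ := heightElem_eq_some_iff.1 hh
  have hxs : xh ∉ s := (List.nodup_cons.1 hnd.of_append_right).1
  have htail : ∀ B ∈ s.map (fun y => ({y} : Finset (Fin n))), xh ∉ B := by
    simp only [List.mem_map, forall_exists_index, and_imp]
    rintro _ y hy rfl hxy
    exact hxs (Finset.mem_singleton.1 hxy ▸ hy)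
  have hlast : (front ++ s.map (fun y => ({y} : Finset (Fin n)))).getLast? ≠ some {xh} :=
    List.getLast?_append_ne hfront fun h =>
      htail _ (List.mem_of_getLast? h) (Finset.mem_singleton_self xh)
  refine ⟨mem_flippable_iff.2 hlast, ?_, cflip_cflip hdisj hne hlast,
    prefV_cflip ((hR xh).1 (by simp)) _⟩
  rw [cflip_append hfront htail]
  exact heightElem_eq_some_iff.2 ⟨r, s, _, rfl, rfl,
    getLast?_cflip_ne (List.pairwise_append.1 hdisj).1 (fun A hA => hne A (by simp [hA])) hfront⟩
end

section
/- For any integer n ≥ 5 and any 0 ≤ t ≤ n-1, there exists a bijection Φ_t^n from C^n_t ∩ ⟨0[01]^*⟩ to C^n_{t+1} ∩ ⟨1[10]^*⟩ such that S ⊆ Φ_t^n(S) for every S in the domain; in particular |Φ_t^n(S)| = |S| + 1 and Φ_t^n(S) is obtained from S by adding one element. -/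
/-- `k` concatenated copies of the binary string `γ`. -/
def reps (γ : List Bool) (k : ℕ) : List Bool := (List.replicate k γ).flatten

/-- The support vector `v` ends (on the right) with the string `β`. -/
def EndsWith (v β : List Bool) : Prop := ∃ γ : List Bool, v = γ ++ β

/-- Pointwise order on support vectors: `v ≤ w` iff every element of the subset
encoded by `v` belongs to the subset encoded by `w`. -/
def vle (v w : List Bool) : Prop :=
  ∀ i : ℕ, v.getD i false = true → w.getD i false = true

/-!
Read backwards, the support vectors of the domain are the words `(10)^k 0 s` and those of the
codomain the words `(01)^k 1 s` (`startsWithAlt false` and `startsWithAlt true`). On reversed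
words `phiRev` keeps leading `10` blocks, turns `01u` into `11u` and `0` into `1`, and sends `00w`
to `01w` if `w` is in the codomain and to `10w` otherwise. This case split is forced: `01w` has no
other preimage, while for `w` outside the codomain `10w` is not reached through a leading `10`
block. Every step turns a single `0` into a `1`, and `psiRev` undoes `phiRev`, so `phi` is a
bijection between the two languages that preserves length and adds exactly one `1`.
-/

def startsWithAlt (b : Bool) : List Bool → Bool
  | [] => false
  | [c] => c == b
  | c :: d :: r => c == b || (d == b && startsWithAlt b r)

lemma reps_succ (γ : List Bool) (k : ℕ) : reps γ (k + 1) = γ ++ reps γ k := by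
  simp [reps, List.replicate_succ]

lemma reverse_reps_pair (a b : Bool) (k : ℕ) : (reps [a, b] k).reverse = reps [b, a] k := by
  induction k with
  | zero => rfl
  | succ k ih =>
    calc (reps [a, b] (k + 1)).reverse = (reps [a, b] k ++ [a, b]).reverse := by
          simp [reps, List.replicate_succ']
      _ = reps [b, a] (k + 1) := by simp [ih, reps_succ]

lemma endsWith_iff_reverse (v β : List Bool) :
    EndsWith v β ↔ ∃ s, v.reverse = β.reverse ++ s := by
  constructor
  · rintro ⟨γ, rfl⟩
    exact ⟨γ.reverse, by simp⟩
  · rintro ⟨s, hs⟩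
    exact ⟨s.reverse, by rw [← List.reverse_reverse v, hs]; simp⟩

lemma startsWithAlt_reps_append (b : Bool) (k : ℕ) (s : List Bool) :
    startsWithAlt b (reps [!b, b] k ++ b :: s) = true := by
  induction k with
  | zero => cases s <;> simp [reps, startsWithAlt]
  | succ k ih => simpa [reps_succ, startsWithAlt] using ih

lemma exists_reps_append_of_startsWithAlt {b : Bool} :
    ∀ {r : List Bool}, startsWithAlt b r = true → ∃ k s, r = reps [!b, b] k ++ b :: s
  | [c], h => ⟨0, [], by simpa [startsWithAlt, reps] using h⟩
  | c :: d :: r, h => by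
    by_cases hc : c = b
    · exact ⟨0, d :: r, by simp [reps, hc]⟩
    · obtain ⟨hd, hr⟩ : d = b ∧ startsWithAlt b r = true := by simpa [startsWithAlt, hc] using h
      obtain ⟨k, s, rfl⟩ := exists_reps_append_of_startsWithAlt hr
      exact ⟨k + 1, s, by simp [reps_succ, hd, Bool.eq_not.mpr hc]⟩

lemma startsWithAlt_iff {b : Bool} {r : List Bool} :
    startsWithAlt b r = true ↔ ∃ k s, r = reps [!b, b] k ++ b :: s := by
  refine ⟨exists_reps_append_of_startsWithAlt, ?_⟩
  rintro ⟨k, s, rfl⟩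
  exact startsWithAlt_reps_append b k s

lemma exists_endsWith_iff (b : Bool) (v : List Bool) :
    (∃ k, EndsWith v ([b] ++ reps [b, !b] k)) ↔ startsWithAlt b v.reverse = true := by
  simp [startsWithAlt_iff, endsWith_iff_reverse, reverse_reps_pair]

def BitCovBy (r r' : List Bool) : Prop :=
  ∃ x y, r = x ++ false :: y ∧ r' = x ++ true :: y

namespace BitCovBy

variable {r r' : List Bool}

lemma head (s : List Bool) : BitCovBy (false :: s) (true :: s) := ⟨[], s, rfl, rfl⟩

lemma cons (b : Bool) : BitCovBy r r' → BitCovBy (b :: r) (b :: r')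
  | ⟨x, y, hr, hr'⟩ => ⟨b :: x, y, by simp [hr], by simp [hr']⟩

lemma reverse : BitCovBy r r' → BitCovBy r.reverse r'.reverse
  | ⟨x, y, hr, hr'⟩ => ⟨y.reverse, x.reverse, by simp [hr], by simp [hr']⟩

lemma length_eq : BitCovBy r r' → r'.length = r.length
  | ⟨x, y, hr, hr'⟩ => by simp [hr, hr']

lemma count_true : BitCovBy r r' → r'.count true = r.count true + 1
  | ⟨x, y, hr, hr'⟩ => by simp [hr, hr', add_assoc]

lemma vle : BitCovBy r r' → vle r r'
  | ⟨x, y, hr, hr'⟩ => by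
    subst hr hr'
    intro i hi
    rcases lt_trichotomy i x.length with hi' | rfl | hi'
    · simpa [List.getD_eq_getElem?_getD, List.getElem?_append_left hi'] using hi
    · simp
    · obtain ⟨j, rfl⟩ := Nat.exists_eq_add_of_lt hi'
      simpa [List.getD_eq_getElem?_getD, List.getElem?_append_right, add_assoc] using hi

end BitCovBy

def phiRev : List Bool → List Bool
  | true :: false :: r => true :: false :: phiRev r
  | false :: false :: w => if startsWithAlt true w then false :: true :: w else true :: false :: w
  | false :: u => true :: u
  | r => r

def psiRev : List Bool → List Bool
  | true :: false :: w =>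
    if startsWithAlt true w then true :: false :: psiRev w else false :: false :: w
  | true :: true :: u => false :: true :: u
  | [true] => [false]
  | false :: true :: w => false :: false :: w
  | w => w

lemma startsWithAlt_phiRev : ∀ {r : List Bool},
    startsWithAlt false r = true → startsWithAlt true (phiRev r) = true
  | true :: false :: _, _ => by simp [phiRev, startsWithAlt]
  | false :: false :: w, _ => by
    by_cases hw : startsWithAlt true w <;> simp [phiRev, startsWithAlt, hw]
  | [false], _ | false :: true :: _, _ => by simp [phiRev, startsWithAlt]

lemma bitCovBy_phiRev : ∀ {r : List Bool},
    startsWithAlt false r = true → BitCovBy r (phiRev r)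
  | true :: false :: r, h => by
    simpa [phiRev] using ((bitCovBy_phiRev (by simpa [startsWithAlt] using h)).cons false).cons true
  | false :: false :: w, _ => by
    by_cases hw : startsWithAlt true w
    · simpa [phiRev, hw] using (BitCovBy.head w).cons false
    · simpa [phiRev, hw] using BitCovBy.head (false :: w)
  | [false], _ => BitCovBy.head []
  | false :: true :: u, _ => BitCovBy.head (true :: u)

lemma psiRev_phiRev : ∀ {r : List Bool},
    startsWithAlt false r = true → psiRev (phiRev r) = r
  | true :: false :: r, h => by
    have hr : startsWithAlt false r = true := by simpa [startsWithAlt] using h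
    simp [phiRev, psiRev, startsWithAlt_phiRev hr, psiRev_phiRev hr]
  | false :: false :: w, _ => by
    by_cases hw : startsWithAlt true w <;> simp [phiRev, psiRev, hw]
  | [false], _ | false :: true :: _, _ => by simp [phiRev, psiRev]

lemma startsWithAlt_psiRev : ∀ {w : List Bool},
    startsWithAlt true w = true → startsWithAlt false (psiRev w) = true
  | true :: false :: w, _ => by
    by_cases hw : startsWithAlt true w
    · simp [psiRev, hw, startsWithAlt, startsWithAlt_psiRev hw]
    · simp [psiRev, hw, startsWithAlt]
  | true :: true :: _, _ | [true], _ | false :: true :: _, _ => by simp [psiRev, startsWithAlt]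

lemma bitCovBy_psiRev : ∀ {w : List Bool},
    startsWithAlt true w = true → BitCovBy (psiRev w) w
  | true :: false :: w, _ => by
    by_cases hw : startsWithAlt true w
    · simpa [psiRev, hw] using ((bitCovBy_psiRev hw).cons false).cons true
    · simpa [psiRev, hw] using BitCovBy.head (false :: w)
  | true :: true :: u, _ => BitCovBy.head (true :: u)
  | [true], _ => BitCovBy.head []
  | false :: true :: w, _ => (BitCovBy.head w).cons false

lemma phiRev_psiRev : ∀ {w : List Bool},
    startsWithAlt true w = true → phiRev (psiRev w) = w
  | true :: false :: w, _ => by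
    by_cases hw : startsWithAlt true w
    · simp [psiRev, phiRev, hw, phiRev_psiRev hw]
    · simp [psiRev, phiRev, hw]
  | true :: true :: _, _ | [true], _ => by simp [psiRev, phiRev]
  | false :: true :: w, h => by
    have hw : startsWithAlt true w = true := by simpa [startsWithAlt] using h
    simp [psiRev, phiRev, hw]

def altLayer (n t : ℕ) (b : Bool) : Set (List Bool) :=
  {v | v.length = n ∧ v.count true = t ∧ ∃ k, EndsWith v ([b] ++ reps [b, !b] k)}

def phi (v : List Bool) : List Bool := (phiRev v.reverse).reverse

def psi (w : List Bool) : List Bool := (psiRev w.reverse).reverse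

section

variable {v w : List Bool} {n t : ℕ}

lemma bitCovBy_phi (hv : ∃ k, EndsWith v ([false] ++ reps [false, true] k)) :
    BitCovBy v (phi v) := by
  simpa [phi] using (bitCovBy_phiRev ((exists_endsWith_iff false v).1 hv)).reverse

lemma bitCovBy_psi (hw : ∃ k, EndsWith w ([true] ++ reps [true, false] k)) :
    BitCovBy (psi w) w := by
  simpa [psi] using (bitCovBy_psiRev ((exists_endsWith_iff true w).1 hw)).reverse

lemma mapsTo_phi : Set.MapsTo phi (altLayer n t false) (altLayer n (t + 1) true) := by
  rintro v ⟨hlen, hcount, hv⟩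
  have hcov := bitCovBy_phi hv
  refine ⟨hcov.length_eq ▸ hlen, by rw [hcov.count_true, hcount], ?_⟩
  rw [exists_endsWith_iff, phi, List.reverse_reverse]
  exact startsWithAlt_phiRev ((exists_endsWith_iff false v).1 hv)

lemma mapsTo_psi : Set.MapsTo psi (altLayer n (t + 1) true) (altLayer n t false) := by
  rintro w ⟨hlen, hcount, hw⟩
  have hcov := bitCovBy_psi hw
  refine ⟨hcov.length_eq ▸ hlen, by have := hcov.count_true; omega, ?_⟩
  rw [exists_endsWith_iff, psi, List.reverse_reverse]
  exact startsWithAlt_psiRev ((exists_endsWith_iff true w).1 hw)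

lemma invOn_psi_phi : Set.InvOn psi phi (altLayer n t false) (altLayer n (t + 1) true) :=
  ⟨fun v ⟨_, _, hv⟩ => by simp [phi, psi, psiRev_phiRev ((exists_endsWith_iff false v).1 hv)],
   fun w ⟨_, _, hw⟩ => by simp [phi, psi, phiRev_psiRev ((exists_endsWith_iff true w).1 hw)]⟩

lemma bijOn_phi : Set.BijOn phi (altLayer n t false) (altLayer n (t + 1) true) :=
  invOn_psi_phi.bijOn mapsTo_phi mapsTo_psi

end

theorem exists_Phi_general (n t : ℕ) :
    ∃ Φ : List Bool → List Bool,
      Set.BijOn Φ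
        {v | v.length = n ∧ v.count true = t ∧
          ∃ k, EndsWith v ([false] ++ reps [false, true] k)}
        {v | v.length = n ∧ v.count true = t + 1 ∧
          ∃ k, EndsWith v ([true] ++ reps [true, false] k)} ∧
      ∀ v, v.length = n → v.count true = t →
        (∃ k, EndsWith v ([false] ++ reps [false, true] k)) → vle v (Φ v) :=
  ⟨phi, bijOn_phi, fun _ _ _ hv => (bitCovBy_phi hv).vle⟩

/-- For any `n ≥ 5` and `0 ≤ t ≤ n-1`, there is a bijection
`Φ : C^n_t ∩ ⟨0[01]^*⟩ → C^n_{t+1} ∩ ⟨1[10]^*⟩` such that `S ⊆ Φ(S)` for all `S`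
in the domain; as the cardinalities differ by one, `Φ(S)` is obtained from `S`
by adding a single element. -/
theorem exists_Phi (n t : ℕ) (hn : 5 ≤ n) (ht : t ≤ n - 1) :
    ∃ Φ : List Bool → List Bool,
      Set.BijOn Φ
        {v | v.length = n ∧ v.count true = t ∧
          ∃ k, EndsWith v ([false] ++ reps [false, true] k)}
        {v | v.length = n ∧ v.count true = t + 1 ∧
          ∃ k, EndsWith v ([true] ++ reps [true, false] k)} ∧
      ∀ v, v.length = n → v.count true = t →
        (∃ k, EndsWith v ([false] ++ reps [false, true] k)) → vle v (Φ v) :=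
  exists_Phi_general n t
end
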